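/- arXiv:1103.3437 — 5 statements merged into one kernel-verified Lean document; each statement's English description precedes it below -/
import Mathlib

section
/- The odd tensor product rule is associative: for abstract q(n)-crystals B1, B2, B3 and the operator f̄_1 defined by the rule 'f̄_1(b1 ⊗ b2) = f̄_1 b1 ⊗ b2 if ⟨k_1, wt b2⟩ = ⟨k_2, wt b2⟩ = 0, and b1 ⊗ f̄_1 b2 otherwise', the canonical bijection (B1 ⊗ B2) ⊗ B3 → B1 ⊗ (B2 ⊗ B3) commutes with f̄_1 (and similarly with ē_1). -/
/-- Data underlying the odd Kashiwara operators on an abstract `q(n)`-crystal: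
a weight map to `ℤ^{n+2}` (so that the first two coordinates always exist) and
partial operators `f̄₁`, `ē₁`. -/
structure OddData (n : ℕ) (B : Type*) where
  wt : B → Fin (n + 2) → ℤ
  fbar : B → Option B
  ebar : B → Option B

/-- The axioms: weights have nonnegative coordinates, `f̄₁` lowers the weight by
`α₁ = ε₁ - ε₂`, `ē₁` raises it by `α₁`, and `f̄₁ b = b' ↔ ē₁ b' = b`. -/
def OddData.Good {n : ℕ} {B : Type*} (D : OddData n B) : Prop :=
  (∀ b j, 0 ≤ D.wt b j) ∧
  (∀ b b', D.fbar b = some b' →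
    D.wt b' 0 = D.wt b 0 - 1 ∧ D.wt b' 1 = D.wt b 1 + 1 ∧
      ∀ j, j ≠ 0 → j ≠ 1 → D.wt b' j = D.wt b j) ∧
  (∀ b b', D.ebar b = some b' →
    D.wt b' 0 = D.wt b 0 + 1 ∧ D.wt b' 1 = D.wt b 1 - 1 ∧
      ∀ j, j ≠ 0 → j ≠ 1 → D.wt b' j = D.wt b j) ∧
  (∀ b b', D.fbar b = some b' ↔ D.ebar b' = some b)

/-- The odd tensor product rule: `f̄₁(b₁ ⊗ b₂) = f̄₁ b₁ ⊗ b₂` if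
`⟨k₁, wt b₂⟩ = ⟨k₂, wt b₂⟩ = 0` and `b₁ ⊗ f̄₁ b₂` otherwise (same for `ē₁`). -/
def OddData.tensor {n : ℕ} {B1 B2 : Type*} (D1 : OddData n B1) (D2 : OddData n B2) :
    OddData n (B1 × B2) where
  wt p j := D1.wt p.1 j + D2.wt p.2 j
  fbar p :=
    if D2.wt p.2 0 = 0 ∧ D2.wt p.2 1 = 0 then (D1.fbar p.1).map (·, p.2)
    else (D2.fbar p.2).map (p.1, ·)
  ebar p :=
    if D2.wt p.2 0 = 0 ∧ D2.wt p.2 1 = 0 then (D1.ebar p.1).map (·, p.2)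
    else (D2.ebar p.2).map (p.1, ·)

/-! Weights are nonnegative, so `b2 ⊗ b3` has vanishing first two weight coordinates exactly when
`b2` and `b3` both do; given this, the rule is associative for any operators, by cases on the
two conditions. -/

namespace OddData

variable {B1 B2 B3 : Type*}

/-- Both `(D1.tensor D2).fbar` and `(D1.tensor D2).ebar` are, definitionally, instances of this
rule with `P := D2.WtNeutral`. -/
def tensorRule (P : B2 → Prop) [DecidablePred P] (f1 : B1 → Option B1) (f2 : B2 → Option B2)
    (p : B1 × B2) : Option (B1 × B2) :=
  if P p.2 then (f1 p.1).map (·, p.2) else (f2 p.2).map (p.1, ·)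

theorem tensorRule_assoc (P2 : B2 → Prop) (P3 : B3 → Prop) (P23 : B2 × B3 → Prop)
    [DecidablePred P2] [DecidablePred P3] [DecidablePred P23]
    (hP23 : ∀ b2 b3, P23 (b2, b3) ↔ P2 b2 ∧ P3 b3)
    (f1 : B1 → Option B1) (f2 : B2 → Option B2) (f3 : B3 → Option B3)
    (b1 : B1) (b2 : B2) (b3 : B3) :
    (tensorRule P3 (tensorRule P2 f1 f2) f3 ((b1, b2), b3)).map (Equiv.prodAssoc B1 B2 B3) =
      tensorRule P23 f1 (tensorRule P3 f2 f3) (b1, (b2, b3)) := by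
  by_cases h3 : P3 b3 <;> by_cases h2 : P2 b2 <;>
    simp [tensorRule, hP23, h2, h3, Option.map_map, Function.comp_def]

/-- The condition `⟨k₁, wt b⟩ = ⟨k₂, wt b⟩ = 0` of the odd tensor product rule. -/
abbrev WtNeutral {n : ℕ} {B : Type*} (D : OddData n B) (b : B) : Prop :=
  D.wt b 0 = 0 ∧ D.wt b 1 = 0

theorem wtNeutral_tensor_iff {n : ℕ} {D2 : OddData n B2} {D3 : OddData n B3}
    (h2 : ∀ b j, 0 ≤ D2.wt b j) (h3 : ∀ b j, 0 ≤ D3.wt b j) (b2 : B2) (b3 : B3) :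
    (D2.tensor D3).WtNeutral (b2, b3) ↔ D2.WtNeutral b2 ∧ D3.WtNeutral b3 := by
  simp only [WtNeutral, tensor, add_eq_zero_iff_of_nonneg (h2 _ _) (h3 _ _)]
  tauto

end OddData

theorem stmt_6_general {n : ℕ} {B1 B2 B3 : Type*}
    (D1 : OddData n B1) (D2 : OddData n B2) (D3 : OddData n B3)
    (h2 : D2.Good) (h3 : D3.Good) :
    ∀ (b1 : B1) (b2 : B2) (b3 : B3),
      (((D1.tensor D2).tensor D3).fbar ((b1, b2), b3)).map
          (fun p => (p.1.1, (p.1.2, p.2))) =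
        (D1.tensor (D2.tensor D3)).fbar (b1, (b2, b3)) ∧
      (((D1.tensor D2).tensor D3).ebar ((b1, b2), b3)).map
          (fun p => (p.1.1, (p.1.2, p.2))) =
        (D1.tensor (D2.tensor D3)).ebar (b1, (b2, b3)) := by
  intro b1 b2 b3
  have hneutral := OddData.wtNeutral_tensor_iff h2.1 h3.1
  exact ⟨OddData.tensorRule_assoc _ _ _ hneutral D1.fbar D2.fbar D3.fbar b1 b2 b3,
    OddData.tensorRule_assoc _ _ _ hneutral D1.ebar D2.ebar D3.ebar b1 b2 b3⟩

/-- The odd tensor product rule is associative: under the canonical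
bijection `(B1 × B2) × B3 ≃ B1 × (B2 × B3)` the two induced operators `f̄₁`
(and `ē₁`) agree. -/
theorem stmt_6 {n : ℕ} {B1 B2 B3 : Type*}
    (D1 : OddData n B1) (D2 : OddData n B2) (D3 : OddData n B3)
    (h1 : D1.Good) (h2 : D2.Good) (h3 : D3.Good) :
    ∀ (b1 : B1) (b2 : B2) (b3 : B3),
      (((D1.tensor D2).tensor D3).fbar ((b1, b2), b3)).map
          (fun p => (p.1.1, (p.1.2, p.2))) =
        (D1.tensor (D2.tensor D3)).fbar (b1, (b2, b3)) ∧
      (((D1.tensor D2).tensor D3).ebar ((b1, b2), b3)).map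
          (fun p => (p.1.1, (p.1.2, p.2))) =
        (D1.tensor (D2.tensor D3)).ebar (b1, (b2, b3)) :=
  stmt_6_general D1 D2 D3 h2 h3
end

section
/- If b is a highest weight vector in the q(n)-crystal B^{⊗N}, then wt(b) is a strict partition, i.e., wt(b) = (λ_1, ..., λ_n) satisfies λ_1 > λ_2 > ... > λ_r > λ_{r+1} = ... = λ_n = 0 for some r. -/
/-!
The `gl(n)`-crystal `𝐁 = {1, …, n}` of the vector representation and its tensor
powers `𝐁^{⊗N}`, realized concretely on words (lists) of letters.  Letters are
`0`-based: the natural number `a` stands for the letter `a+1`, so the letters of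
`𝐁` are `0, 1, …, n-1`, and the operator index `i` (`0`-based, standing for
`i+1 ∈ {1, …, n-1}`) acts on the letters `i, i+1`.  A list `[a₁, …, a_N]`
stands for the tensor `a₁ ⊗ ⋯ ⊗ a_N`.
-/

namespace QWord

/-- `e i` on a single letter. -/
def eL (i a : ℕ) : Option ℕ := if a = i + 1 then some i else none

/-- `f i` on a single letter. -/
def fL (i a : ℕ) : Option ℕ := if a = i then some (i + 1) else none

/-- `φ i` of a single letter. -/
def phiL (i a : ℕ) : ℕ := if a = i then 1 else 0

/-- `ε i` of a single letter. -/
def epsL (i a : ℕ) : ℕ := if a = i + 1 then 1 else 0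

/-- `ε i` of a word, via `ε(b₁ ⊗ b₂) = max (ε(b₁), ε(b₂) - ⟨hᵢ, wt b₁⟩)`. -/
def epsW (i : ℕ) : List ℕ → ℕ
  | [] => 0
  | a :: w => max (epsL i a) (epsW i w + epsL i a - phiL i a)

/-- `φ i` of a word, via `φ(b₁ ⊗ b₂) = max (φ(b₂), φ(b₁) + ⟨hᵢ, wt b₂⟩)`. -/
def phiW (i : ℕ) : List ℕ → ℕ
  | [] => 0
  | a :: w => max (phiW i w) (phiL i a + w.count i - w.count (i + 1))

/-- The even Kashiwara operator `e i` on words (the tensor product rule: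
`e(b₁ ⊗ b₂) = e b₁ ⊗ b₂` if `φ(b₁) ≥ ε(b₂)`, else `b₁ ⊗ e b₂`). -/
def eW (i : ℕ) : List ℕ → Option (List ℕ)
  | [] => none
  | a :: w =>
    if epsW i w ≤ phiL i a then (eL i a).map (· :: w)
    else (eW i w).map (a :: ·)

/-- The even Kashiwara operator `f i` on words (the tensor product rule:
`f(b₁ ⊗ b₂) = f b₁ ⊗ b₂` if `φ(b₁) > ε(b₂)`, else `b₁ ⊗ f b₂`). -/
def fW (i : ℕ) : List ℕ → Option (List ℕ)
  | [] => none
  | a :: w =>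
    if epsW i w < phiL i a then (fL i a).map (· :: w)
    else (fW i w).map (a :: ·)

/-- The odd Kashiwara operator `ē₁` on words: by the odd tensor product rule it
acts on the rightmost letter of the word lying in `{1, 2}` (here `{0, 1}`), and
is nonzero exactly when that letter is `2` (here `1`), turning it into `1`
(here `0`). -/
def ebarW : List ℕ → Option (List ℕ)
  | [] => none
  | a :: w =>
    if w.count 0 = 0 ∧ w.count 1 = 0 then
      (if a = 1 then some 0 else none).map (· :: w)
    else (ebarW w).map (a :: ·)

/-- The odd Kashiwara operator `f̄₁` on words. -/
def fbarW : List ℕ → Option (List ℕ)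
  | [] => none
  | a :: w =>
    if w.count 0 = 0 ∧ w.count 1 = 0 then
      (if a = 0 then some 1 else none).map (· :: w)
    else (fbarW w).map (a :: ·)

/-- Iterate a partial operator. -/
def iterOpt (g : List ℕ → Option (List ℕ)) : ℕ → List ℕ → Option (List ℕ)
  | 0, b => some b
  | k + 1, b => (g b).bind (iterOpt g k)

/-- The Weyl group reflection `Sᵢ b = fᵢ^{⟨hᵢ, wt b⟩} b` if `⟨hᵢ, wt b⟩ ≥ 0`
and `eᵢ^{-⟨hᵢ, wt b⟩} b` otherwise; note `⟨hᵢ, wt b⟩` is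
`count i - count (i+1)` for a word. -/
def SiW (i : ℕ) (b : List ℕ) : Option (List ℕ) :=
  if b.count (i + 1) ≤ b.count i then iterOpt (fW i) (b.count i - b.count (i + 1)) b
  else iterOpt (eW i) (b.count (i + 1) - b.count i) b

/-- `applySeq [j₁, …, j_k] b = (S_{j₁} ∘ ⋯ ∘ S_{j_k}) b`. -/
def applySeq : List ℕ → List ℕ → Option (List ℕ)
  | [], b => some b
  | j :: t, b => (applySeq t b).bind (SiW j)

/-- The reduced word (`0`-based list of simple reflections) of
`w_i = s₂ ⋯ s_i s₁ ⋯ s_{i-1}`, for the `1`-based index `i`. -/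
def wiList (i : ℕ) : List ℕ := (List.range (i - 1)).map (· + 1) ++ List.range (i - 1)

/-- The odd operator `ē_i = S_{w_i}⁻¹ ∘ ē₁ ∘ S_{w_i}` on words; here `i` is the
`0`-based index (so `ebarWi 0 = ē₁`, up to the trivial conjugation). -/
def ebarWi (i : ℕ) (b : List ℕ) : Option (List ℕ) :=
  ((applySeq (wiList (i + 1)) b).bind ebarW).bind (applySeq (wiList (i + 1)).reverse)

end QWord

/-!
`e_i b = 0` says that every prefix of `b` contains at least as many letters `i` as letters
`i + 1` (in the paper's `1`-based notation), so `wt b = λ` is a partition. Suppose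
`λ_k = λ_{k+1} > 0`. The reflection `S_{w_k}` moves `λ_k, λ_{k+1}` to the first two places, and
`v = S_{w_k} b` still satisfies `ε_1 v = 0`; then the rightmost letter of `v` in `{1, 2}` is a `2`,
so `ē_1 v ≠ 0` and hence `ē_k b ≠ 0`.

To see `ε_1 v = 0`, write `w_k = s_2 s_1 w'` with `w'` the word `w_{k-1}` shifted up by one, after
commuting far-apart reflections, and induct on `k`. The step is a computation with the signature
rule: on a word with `ε_i = ε_{i+1} = 0` and `λ_{i+1} = λ_{i+2}`, `S_{i+1} S_i` is
`f_{i+1}^d f_i^d` with `d = λ_i - λ_{i+1}`, and in every prefix the second step raises at least as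
many letters as the first, which keeps `ε_i = 0`.
-/

namespace QWord

/-- `⟨h_i, wt a⟩` for a letter `a`; `prefixPairing i x p` is `⟨h_i, wt⟩` of the first `p`
letters of `x`. -/
def letterPairing (i a : ℕ) : ℤ := (if a = i then 1 else 0) - (if a = i + 1 then 1 else 0)

def prefixPairing (i : ℕ) (x : List ℕ) (p : ℕ) : ℤ :=
  ((x.take p).count i : ℤ) - (x.take p).count (i + 1)

def minPrefixPairing (i : ℕ) : List ℕ → ℤ
  | [] => 0
  | a :: w => min 0 (letterPairing i a + minPrefixPairing i w)

/-- The minimum of `prefixPairing i x q` over `q ≥ p`. -/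
def minPrefixPairingFrom (i : ℕ) (x : List ℕ) (p : ℕ) : ℤ :=
  prefixPairing i x p + minPrefixPairing i (x.drop p)

def IsLattice (i : ℕ) (x : List ℕ) : Prop := ∀ p, 0 ≤ prefixPairing i x p

section Pairing

variable {i : ℕ}

lemma letterPairing_of_ne {a : ℕ} (h : a ≠ i) (h' : a ≠ i + 1) : letterPairing i a = 0 := by
  simp [letterPairing, h, h']

@[simp] lemma prefixPairing_zero (x : List ℕ) : prefixPairing i x 0 = 0 := by simp [prefixPairing]

lemma prefixPairing_cons_succ (a : ℕ) (w : List ℕ) (p : ℕ) :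
    prefixPairing i (a :: w) (p + 1) = letterPairing i a + prefixPairing i w p := by
  simp only [prefixPairing, letterPairing, List.take_succ_cons, List.count_cons, beq_iff_eq]
  split_ifs <;> omega

lemma prefixPairing_add (x : List ℕ) (p r : ℕ) :
    prefixPairing i x (p + r) = prefixPairing i x p + prefixPairing i (x.drop p) r := by
  simp only [prefixPairing, List.take_add, List.count_append]
  omega

lemma prefixPairing_of_length_le {x : List ℕ} {p : ℕ} (h : x.length ≤ p) :
    prefixPairing i x p = (x.count i : ℤ) - x.count (i + 1) := by
  simp [prefixPairing, List.take_of_length_le h]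

lemma minPrefixPairing_nonpos (x : List ℕ) : minPrefixPairing i x ≤ 0 := by
  cases x <;> simp [minPrefixPairing]

lemma le_minPrefixPairing_iff {x : List ℕ} {c : ℤ} :
    c ≤ minPrefixPairing i x ↔ ∀ p, c ≤ prefixPairing i x p := by
  induction x generalizing c with
  | nil => simp [minPrefixPairing, prefixPairing]
  | cons a w ih =>
    simp only [minPrefixPairing, le_min_iff]
    constructor
    · rintro ⟨h0, hw⟩ (_ | p)
      · simpa using h0
      · rw [prefixPairing_cons_succ]
        linarith [ih.1 (show c - letterPairing i a ≤ minPrefixPairing i w by linarith) p]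
    · intro h
      refine ⟨by simpa using h 0, ?_⟩
      have := ih.2 fun p => (show c - letterPairing i a ≤ prefixPairing i w p by
        linarith [h (p + 1), prefixPairing_cons_succ (i := i) a w p])
      linarith

lemma minPrefixPairing_le_prefixPairing (x : List ℕ) (p : ℕ) :
    minPrefixPairing i x ≤ prefixPairing i x p :=
  le_minPrefixPairing_iff.1 le_rfl p

lemma exists_prefixPairing_le_minPrefixPairing (x : List ℕ) :
    ∃ p, prefixPairing i x p ≤ minPrefixPairing i x := by
  by_contra! h
  have := le_minPrefixPairing_iff.2 fun p => Int.add_one_le_iff.2 (h p)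
  omega

lemma minPrefixPairing_mono {x y : List ℕ} (h : ∀ p, prefixPairing i y p ≤ prefixPairing i x p) :
    minPrefixPairing i y ≤ minPrefixPairing i x := by
  obtain ⟨p, hp⟩ := exists_prefixPairing_le_minPrefixPairing (i := i) x
  exact (minPrefixPairing_le_prefixPairing y p).trans ((h p).trans hp)

lemma isLattice_iff_minPrefixPairing_eq_zero {x : List ℕ} :
    IsLattice i x ↔ minPrefixPairing i x = 0 := by
  rw [IsLattice, ← le_minPrefixPairing_iff]
  exact ⟨fun h => le_antisymm (minPrefixPairing_nonpos x) h, fun h => h.ge⟩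

lemma le_minPrefixPairingFrom_iff {x : List ℕ} {p : ℕ} {c : ℤ} :
    c ≤ minPrefixPairingFrom i x p ↔ ∀ r, c ≤ prefixPairing i x (p + r) := by
  simp only [minPrefixPairingFrom, prefixPairing_add]
  rw [← sub_le_iff_le_add', le_minPrefixPairing_iff]
  exact forall_congr' fun r => sub_le_iff_le_add'

lemma minPrefixPairingFrom_le_prefixPairing (x : List ℕ) (p : ℕ) :
    minPrefixPairingFrom i x p ≤ prefixPairing i x p := by
  simpa using le_minPrefixPairingFrom_iff.1 (le_refl (minPrefixPairingFrom i x p)) 0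

lemma minPrefixPairingFrom_mono (x : List ℕ) {p q : ℕ} (h : p ≤ q) :
    minPrefixPairingFrom i x p ≤ minPrefixPairingFrom i x q := by
  obtain ⟨r, rfl⟩ := Nat.exists_eq_add_of_le h
  refine le_minPrefixPairingFrom_iff.2 fun t => ?_
  simpa [Nat.add_assoc] using le_minPrefixPairingFrom_iff.1 le_rfl (r + t)

lemma minPrefixPairing_le_minPrefixPairingFrom (x : List ℕ) (p : ℕ) :
    minPrefixPairing i x ≤ minPrefixPairingFrom i x p :=
  le_minPrefixPairingFrom_iff.2 fun r => minPrefixPairing_le_prefixPairing x (p + r)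

@[simp] lemma minPrefixPairingFrom_zero (x : List ℕ) :
    minPrefixPairingFrom i x 0 = minPrefixPairing i x := by
  simp [minPrefixPairingFrom]

lemma minPrefixPairingFrom_cons_succ (a : ℕ) (w : List ℕ) (p : ℕ) :
    minPrefixPairingFrom i (a :: w) (p + 1) = letterPairing i a + minPrefixPairingFrom i w p := by
  simp only [minPrefixPairingFrom, prefixPairing_cons_succ, List.drop_succ_cons]
  ring

lemma minPrefixPairingFrom_length (x : List ℕ) :
    minPrefixPairingFrom i x x.length = (x.count i : ℤ) - x.count (i + 1) := by
  simp [minPrefixPairingFrom, prefixPairing_of_length_le le_rfl, minPrefixPairing]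

lemma epsW_eq (x : List ℕ) : (epsW i x : ℤ) = -minPrefixPairing i x := by
  induction x with
  | nil => simp [epsW, minPrefixPairing]
  | cons a w ih =>
    simp only [epsW, minPrefixPairing, epsL, phiL, letterPairing]
    split_ifs <;> omega

lemma phiW_eq (x : List ℕ) :
    (phiW i x : ℤ) = (x.count i : ℤ) - x.count (i + 1) - minPrefixPairing i x := by
  induction x with
  | nil => simp [phiW, minPrefixPairing]
  | cons a w ih =>
    have := minPrefixPairing_nonpos (i := i) w
    simp only [phiW, minPrefixPairing, phiL, letterPairing, List.count_cons, beq_iff_eq]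
    split_ifs <;> omega

lemma isLattice_iff_epsW_eq_zero {x : List ℕ} : IsLattice i x ↔ epsW i x = 0 := by
  rw [isLattice_iff_minPrefixPairing_eq_zero]
  have := epsW_eq (i := i) x
  omega

lemma IsLattice.count_succ_le {x : List ℕ} (h : IsLattice i x) : x.count (i + 1) ≤ x.count i := by
  have := h x.length
  rw [prefixPairing_of_length_le le_rfl] at this
  omega

lemma isLattice_of_succ_not_mem {x : List ℕ} (h : i + 1 ∉ x) : IsLattice i x := fun p => by
  have : (x.take p).count (i + 1) = 0 :=
    List.count_eq_zero.2 fun hm => h (List.take_subset p x hm)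
  simp [prefixPairing, this]

end Pairing

section Scan

variable (i src tgt : ℕ) (c : ℕ → ℕ → Prop) [DecidableRel c]

/-- Both `f_i^k` and `e_i^k` have this shape, so that far-apart Kashiwara operators commute by
the single lemma `scanReplace_comm`. -/
def scanReplace : ℕ → List ℕ → List ℕ
  | _, [] => []
  | k, a :: w =>
    if a = src ∧ c k (epsW i w) then tgt :: scanReplace (k - 1) w else a :: scanReplace k w

variable {i src tgt c}

@[simp] lemma scanReplace_nil (k : ℕ) : scanReplace i src tgt c k [] = [] := rfl

lemma scanReplace_cons_of_pos {k a : ℕ} {w : List ℕ} (h : a = src ∧ c k (epsW i w)) :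
    scanReplace i src tgt c k (a :: w) = tgt :: scanReplace i src tgt c (k - 1) w := by
  rw [scanReplace, if_pos h]

lemma scanReplace_cons_of_neg {k a : ℕ} {w : List ℕ} (h : ¬(a = src ∧ c k (epsW i w))) :
    scanReplace i src tgt c k (a :: w) = a :: scanReplace i src tgt c k w := by
  rw [scanReplace, if_neg h]

lemma length_scanReplace (k : ℕ) (x : List ℕ) :
    (scanReplace i src tgt c k x).length = x.length := by
  induction x generalizing k with
  | nil => rfl
  | cons a w ih => rw [scanReplace]; split_ifs <;> simp [ih]

lemma count_take_scanReplace_of_ne {b : ℕ} (hs : b ≠ src) (ht : b ≠ tgt) (k : ℕ) (x : List ℕ)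
    (p : ℕ) : ((scanReplace i src tgt c k x).take p).count b = (x.take p).count b := by
  induction x generalizing k p with
  | nil => simp
  | cons a w ih =>
    rcases p with _ | p
    · simp
    rw [scanReplace]
    split_ifs with h
    · simp [h.1, ih, Ne.symm hs, Ne.symm ht]
    · simp [List.count_cons, ih]

lemma count_scanReplace_of_ne {b : ℕ} (hs : b ≠ src) (ht : b ≠ tgt) (k : ℕ) (x : List ℕ) :
    (scanReplace i src tgt c k x).count b = x.count b := by
  simpa [List.take_of_length_le, length_scanReplace] using
    count_take_scanReplace_of_ne hs ht k x x.length

lemma count_take_scanReplace_add (hst : src ≠ tgt) (k : ℕ) (x : List ℕ) (p : ℕ) :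
    ((scanReplace i src tgt c k x).take p).count src
      + ((scanReplace i src tgt c k x).take p).count tgt
      = (x.take p).count src + (x.take p).count tgt := by
  induction x generalizing k p with
  | nil => simp
  | cons a w ih =>
    rcases p with _ | p
    · simp
    rw [scanReplace]
    split_ifs with h
    · have := ih (k - 1) p
      simp only [List.take_succ_cons, List.count_cons, h.1, beq_iff_eq]
      split_ifs <;> omega
    · have := ih k p
      simp only [List.take_succ_cons, List.count_cons, beq_iff_eq]
      split_ifs <;> omega

lemma count_scanReplace_add (hst : src ≠ tgt) (k : ℕ) (x : List ℕ) :
    (scanReplace i src tgt c k x).count src + (scanReplace i src tgt c k x).count tgt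
      = x.count src + x.count tgt := by
  simpa [List.take_of_length_le, length_scanReplace] using
    count_take_scanReplace_add hst k x x.length

lemma minPrefixPairing_scanReplace {j : ℕ} (h : letterPairing j src = letterPairing j tgt)
    (k : ℕ) (x : List ℕ) :
    minPrefixPairing j (scanReplace i src tgt c k x) = minPrefixPairing j x := by
  induction x generalizing k with
  | nil => rfl
  | cons a w ih =>
    rw [scanReplace]
    split_ifs with ha
    · simp [minPrefixPairing, ih, ha.1, h]
    · simp [minPrefixPairing, ih]

lemma epsW_scanReplace {j : ℕ} (h : letterPairing j src = letterPairing j tgt) (k : ℕ)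
    (x : List ℕ) : epsW j (scanReplace i src tgt c k x) = epsW j x := by
  have h1 := epsW_eq (i := j) (scanReplace i src tgt c k x)
  have h2 := epsW_eq (i := j) x
  rw [minPrefixPairing_scanReplace h] at h1
  omega

lemma scanReplace_comm {i' src' tgt' : ℕ} {c' : ℕ → ℕ → Prop} [DecidableRel c']
    (h₁ : src ≠ src') (h₂ : src ≠ tgt') (h₃ : tgt ≠ src')
    (h : letterPairing i src' = letterPairing i tgt')
    (h' : letterPairing i' src = letterPairing i' tgt) (k k' : ℕ) (x : List ℕ) :
    scanReplace i src tgt c k (scanReplace i' src' tgt' c' k' x)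
      = scanReplace i' src' tgt' c' k' (scanReplace i src tgt c k x) := by
  induction x generalizing k k' with
  | nil => rfl
  | cons a w ih =>
    by_cases ha' : a = src' ∧ c' k' (epsW i' w)
    · have ha₁ := ha'.1
      rw [scanReplace_cons_of_pos ha',
        scanReplace_cons_of_neg (by rintro ⟨ha, -⟩; exact h₂ ha.symm),
        scanReplace_cons_of_neg (by rintro ⟨ha, -⟩; exact h₁ (by omega)),
        scanReplace_cons_of_pos (by rwa [epsW_scanReplace h']), ih]
    by_cases ha : a = src ∧ c k (epsW i w)
    · rw [scanReplace_cons_of_neg ha', scanReplace_cons_of_pos (by rwa [epsW_scanReplace h]),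
        scanReplace_cons_of_pos ha, scanReplace_cons_of_neg (by rintro ⟨ha, -⟩; exact h₃ ha), ih]
    · rw [scanReplace_cons_of_neg ha', scanReplace_cons_of_neg (by rwa [epsW_scanReplace h]),
        scanReplace_cons_of_neg ha, scanReplace_cons_of_neg (by rwa [epsW_scanReplace h']), ih]

end Scan

/-- `f_i^k` (see `iterOpt_fW`): raise the `k` leftmost unpaired letters `i`, a letter `i` being
unpaired when the word after it has `ε_i = 0`. -/
def fPow (i : ℕ) : ℕ → List ℕ → List ℕ := scanReplace i i (i + 1) fun k e => e = 0 ∧ 1 ≤ k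

/-- `ePow i k` agrees with `e_i^k` only for `k ≤ ε_i` (see `iterOpt_eW`). -/
def ePow (i : ℕ) : ℕ → List ℕ → List ℕ := scanReplace i (i + 1) i fun k e => e < k

section Raise

variable {i : ℕ}

lemma fPow_cons (k a : ℕ) (w : List ℕ) : fPow i k (a :: w) =
    if a = i ∧ epsW i w = 0 ∧ 1 ≤ k then (i + 1) :: fPow i (k - 1) w else a :: fPow i k w :=
  rfl

@[simp] lemma fPow_zero (x : List ℕ) : fPow i 0 x = x := by
  induction x with
  | nil => rfl
  | cons a w ih => simp [fPow_cons, ih]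

/-- The signature rule: among the first `p` letters of `x` there are
`minPrefixPairingFrom i x p - minPrefixPairing i x` unpaired letters `i`. -/
lemma count_take_succ_fPow (k : ℕ) (x : List ℕ) (p : ℕ) :
    (((fPow i k x).take p).count (i + 1) : ℤ) = ((x.take p).count (i + 1) : ℤ)
      + min (k : ℤ) (minPrefixPairingFrom i x p - minPrefixPairing i x) := by
  induction x generalizing k p with
  | nil => simp [minPrefixPairingFrom, minPrefixPairing, prefixPairing, fPow]
  | cons a w ih =>
    rcases p with _ | p
    · simp
    have hm := minPrefixPairing_le_minPrefixPairingFrom (i := i) w p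
    have hm0 := minPrefixPairing_nonpos (i := i) w
    have he := epsW_eq (i := i) w
    have ih₁ := ih (k - 1) p
    have ih₂ := ih k p
    rw [minPrefixPairingFrom_cons_succ, minPrefixPairing, fPow_cons]
    split_ifs <;>
      simp only [List.take_succ_cons, List.count_cons, beq_iff_eq, letterPairing] <;>
      split_ifs <;> omega

lemma count_take_fPow_add (k : ℕ) (x : List ℕ) (p : ℕ) :
    ((fPow i k x).take p).count i + ((fPow i k x).take p).count (i + 1)
      = (x.take p).count i + (x.take p).count (i + 1) :=
  count_take_scanReplace_add (Nat.ne_add_one i) k x p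

lemma count_fPow_add (k : ℕ) (x : List ℕ) :
    (fPow i k x).count i + (fPow i k x).count (i + 1) = x.count i + x.count (i + 1) :=
  count_scanReplace_add (Nat.ne_add_one i) k x

lemma count_fPow_of_ne {b : ℕ} (h : b ≠ i) (h' : b ≠ i + 1) (k : ℕ) (x : List ℕ) :
    (fPow i k x).count b = x.count b :=
  count_scanReplace_of_ne h h' k x

lemma count_take_fPow_of_ne {b : ℕ} (h : b ≠ i) (h' : b ≠ i + 1) (k : ℕ) (x : List ℕ) (p : ℕ) :
    ((fPow i k x).take p).count b = (x.take p).count b :=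
  count_take_scanReplace_of_ne h h' k x p

lemma length_fPow (k : ℕ) (x : List ℕ) : (fPow i k x).length = x.length :=
  length_scanReplace k x

lemma count_succ_fPow (k : ℕ) (x : List ℕ) :
    ((fPow i k x).count (i + 1) : ℤ) = (x.count (i + 1) : ℤ) + min (k : ℤ) (phiW i x) := by
  have := count_take_succ_fPow (i := i) k x x.length
  rwa [← length_fPow k x, List.take_length, length_fPow, List.take_length,
    minPrefixPairingFrom_length, ← phiW_eq] at this

lemma minPrefixPairing_fPow_le (k : ℕ) (x : List ℕ) :
    minPrefixPairing i (fPow i k x) ≤ minPrefixPairing i x := by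
  refine minPrefixPairing_mono fun p => ?_
  have h₁ := count_take_succ_fPow (i := i) k x p
  have h₂ := count_take_fPow_add (i := i) k x p
  have h₃ := minPrefixPairing_le_minPrefixPairingFrom (i := i) x p
  simp only [prefixPairing]
  omega

lemma fPow_add (j k : ℕ) (x : List ℕ) : fPow i j (fPow i k x) = fPow i (j + k) x := by
  induction x generalizing j k with
  | nil => rfl
  | cons a w ih =>
    by_cases h : a = i ∧ epsW i w = 0 ∧ 1 ≤ k
    · rw [fPow_cons, if_pos h, fPow_cons, if_neg (by omega), ih, fPow_cons,
        if_pos ⟨h.1, h.2.1, by omega⟩, Nat.add_sub_assoc h.2.2]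
    rw [fPow_cons k, if_neg h]
    by_cases ha : a = i ∧ epsW i w = 0
    · obtain rfl : k = 0 := by omega
      simp
    have hε : ¬(a = i ∧ epsW i (fPow i k w) = 0) := by
      have := minPrefixPairing_fPow_le (i := i) k w
      have := epsW_eq (i := i) w
      have := epsW_eq (i := i) (fPow i k w)
      omega
    rw [fPow_cons, if_neg (by tauto), fPow_cons, if_neg (by tauto), ih]

lemma fW_eq_some {x : List ℕ} (h : 1 ≤ phiW i x) : fW i x = some (fPow i 1 x) := by
  induction x with
  | nil => simp [phiW] at h
  | cons a w ih =>
    have hφ := phiW_eq (i := i) (a :: w)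
    have hφw := phiW_eq (i := i) w
    have hε := epsW_eq (i := i) w
    simp only [minPrefixPairing, List.count_cons, beq_iff_eq, letterPairing] at hφ
    rw [fW, fPow_cons]
    by_cases ha : a = i ∧ epsW i w = 0
    · rw [if_pos (by simp [phiL, ha.1, ha.2]), if_pos ⟨ha.1, ha.2, le_rfl⟩]
      simp [fL, ha.1]
    rw [if_neg (by simp only [phiL]; split_ifs <;> omega), if_neg (by omega),
      ih (by split_ifs at hφ <;> omega)]
    rfl

lemma iterOpt_fW {k : ℕ} {x : List ℕ} (h : k ≤ phiW i x) :
    iterOpt (fW i) k x = some (fPow i k x) := by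
  induction k generalizing x with
  | zero => simp [iterOpt]
  | succ k ih =>
    rw [iterOpt, fW_eq_some (by omega), Option.bind_some, ih, fPow_add]
    -- `f_i^(k+1) x = f_i^k (f_i x)` raises `k + 1` letters, so `φ_i (f_i x) ≥ k`
    have h₁ := count_succ_fPow (i := i) (k + 1) x
    have h₂ := count_succ_fPow (i := i) k (fPow i 1 x)
    have h₃ := count_succ_fPow (i := i) 1 x
    rw [fPow_add] at h₂
    omega

end Raise

section Lower

variable {i : ℕ}

lemma ePow_cons (k a : ℕ) (w : List ℕ) : ePow i k (a :: w) =
    if a = i + 1 ∧ epsW i w < k then i :: ePow i (k - 1) w else a :: ePow i k w :=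
  rfl

@[simp] lemma ePow_zero (x : List ℕ) : ePow i 0 x = x := by
  induction x with
  | nil => rfl
  | cons a w ih => simp [ePow_cons, ih]

lemma epsW_ePow {k : ℕ} {x : List ℕ} (h : k ≤ epsW i x) :
    epsW i (ePow i k x) = epsW i x - k := by
  suffices minPrefixPairing i (ePow i k x) = minPrefixPairing i x + k by
    have := epsW_eq (i := i) x
    have := epsW_eq (i := i) (ePow i k x)
    omega
  induction x generalizing k with
  | nil => simp_all [epsW]
  | cons a w ih =>
    have hx := epsW_eq (i := i) (a :: w)
    have hw := epsW_eq (i := i) w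
    simp only [minPrefixPairing, letterPairing] at hx
    rw [ePow_cons]
    split_ifs with hc
    · have := ih (k := k - 1) (by omega)
      simp only [minPrefixPairing, letterPairing]
      split_ifs at hx ⊢ <;> omega
    · have := ih (k := k) (by split_ifs at hx <;> omega)
      simp only [minPrefixPairing, letterPairing]
      split_ifs at hx ⊢ <;> omega

lemma ePow_add {j k : ℕ} {x : List ℕ} (h : j + k ≤ epsW i x) :
    ePow i j (ePow i k x) = ePow i (j + k) x := by
  induction x generalizing j k with
  | nil => rfl
  | cons a w ih =>
    have hx := epsW_eq (i := i) (a :: w)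
    have hw := epsW_eq (i := i) w
    simp only [minPrefixPairing, letterPairing] at hx
    by_cases hc : a = i + 1 ∧ epsW i w < k
    · obtain rfl : j = 0 := by split_ifs at hx <;> omega
      simp
    rw [ePow_cons k, if_neg hc, ePow_cons, ePow_cons]
    by_cases ha : a = i + 1
    · replace hx : epsW i (a :: w) = epsW i w + 1 := by split_ifs at hx <;> omega
      rw [epsW_ePow (by omega)]
      by_cases hj : epsW i w < j + k
      · rw [if_pos ⟨ha, by omega⟩, if_pos ⟨ha, hj⟩, ih (by omega),
          Nat.sub_add_comm (by omega)]
      · rw [if_neg (by omega), if_neg (by omega), ih (by omega)]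
    · rw [if_neg (by tauto), if_neg (by tauto), ih (by split_ifs at hx <;> omega)]

lemma eW_eq_some {x : List ℕ} (h : 1 ≤ epsW i x) : eW i x = some (ePow i 1 x) := by
  induction x with
  | nil => simp [epsW] at h
  | cons a w ih =>
    have hx := epsW_eq (i := i) (a :: w)
    have hw := epsW_eq (i := i) w
    simp only [minPrefixPairing, letterPairing] at hx
    rw [eW, ePow_cons]
    by_cases ha : a = i + 1 ∧ epsW i w = 0
    · rw [if_pos (by simp [phiL, ha.2]), if_pos ⟨ha.1, by omega⟩]
      simp [eL, ha.1]
    rw [if_neg (by simp only [phiL]; split_ifs at hx ⊢ <;> omega), if_neg (by omega),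
      ih (by split_ifs at hx <;> omega)]
    rfl

lemma iterOpt_eW {k : ℕ} {x : List ℕ} (h : k ≤ epsW i x) :
    iterOpt (eW i) k x = some (ePow i k x) := by
  induction k generalizing x with
  | zero => simp [iterOpt]
  | succ k ih =>
    rw [iterOpt, eW_eq_some (by omega), Option.bind_some, ih (by rw [epsW_ePow] <;> omega),
      ePow_add h]

end Lower

def reflect (i : ℕ) (u : List ℕ) : List ℕ :=
  if u.count (i + 1) ≤ u.count i then fPow i (u.count i - u.count (i + 1)) u
  else ePow i (u.count (i + 1) - u.count i) u

section Reflect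

variable {i : ℕ}

lemma SiW_eq_some (u : List ℕ) : SiW i u = some (reflect i u) := by
  have hφ := phiW_eq (i := i) u
  have hε := epsW_eq (i := i) u
  have hm := minPrefixPairing_nonpos (i := i) u
  have hD := minPrefixPairing_le_prefixPairing (i := i) u u.length
  rw [prefixPairing_of_length_le le_rfl] at hD
  rw [SiW, reflect]
  split_ifs
  · exact iterOpt_fW (by omega)
  · exact iterOpt_eW (by omega)

lemma applySeq_eq_some (L u : List ℕ) : applySeq L u = some (L.foldr reflect u) := by
  induction L with
  | nil => rfl
  | cons j t ih => rw [applySeq, ih, Option.bind_some, SiW_eq_some, List.foldr_cons]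

lemma reflect_of_count_le {u : List ℕ} (h : u.count (i + 1) ≤ u.count i) :
    reflect i u = fPow i (u.count i - u.count (i + 1)) u :=
  if_pos h

lemma count_take_reflect_of_ne {b : ℕ} (h : b ≠ i) (h' : b ≠ i + 1) (u : List ℕ) (p : ℕ) :
    ((reflect i u).take p).count b = (u.take p).count b := by
  rw [reflect]
  split_ifs
  · exact count_take_scanReplace_of_ne h h' _ u p
  · exact count_take_scanReplace_of_ne h' h _ u p

lemma count_reflect_of_ne {b : ℕ} (h : b ≠ i) (h' : b ≠ i + 1) (u : List ℕ) :
    (reflect i u).count b = u.count b := by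
  rw [reflect]
  split_ifs
  · exact count_scanReplace_of_ne h h' _ u
  · exact count_scanReplace_of_ne h' h _ u

lemma reflect_comm {m : ℕ} (h : i + 2 ≤ m ∨ m + 2 ≤ i) (u : List ℕ) :
    reflect i (reflect m u) = reflect m (reflect i u) := by
  rw [reflect.eq_1 i, count_reflect_of_ne (by omega) (by omega),
    count_reflect_of_ne (by omega) (by omega), reflect.eq_1 m (reflect i u),
    count_reflect_of_ne (by omega) (by omega), count_reflect_of_ne (by omega) (by omega)]
  unfold reflect fPow ePow
  split_ifs <;> apply scanReplace_comm <;>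
    first | omega | rw [letterPairing_of_ne, letterPairing_of_ne] <;> omega

lemma foldr_reflect_comm {L : List ℕ} (h : ∀ m ∈ L, i + 2 ≤ m) (u : List ℕ) :
    L.foldr reflect (reflect i u) = reflect i (L.foldr reflect u) := by
  induction L with
  | nil => rfl
  | cons m L ih =>
    rw [List.foldr_cons, ih fun m' hm' => h m' (List.mem_cons_of_mem m hm'), List.foldr_cons,
      reflect_comm (Or.inl (h m List.mem_cons_self))]

lemma count_take_foldr_reflect_of_lt {L : List ℕ} (h : ∀ m ∈ L, i < m) (u : List ℕ) (p : ℕ) :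
    ((L.foldr reflect u).take p).count i = (u.take p).count i := by
  induction L with
  | nil => rfl
  | cons m L ih =>
    have hm := h m List.mem_cons_self
    rw [List.foldr_cons, count_take_reflect_of_ne (by omega) (by omega),
      ih fun m' hm' => h m' (List.mem_cons_of_mem m hm')]

end Reflect

section Lattice

variable {i : ℕ}

lemma IsLattice.count_take_succ_fPow {x : List ℕ} (hx : IsLattice i x) (k p : ℕ) :
    (((fPow i k x).take p).count (i + 1) : ℤ)
      = ((x.take p).count (i + 1) : ℤ) + min (k : ℤ) (minPrefixPairingFrom i x p) := by
  simpa [isLattice_iff_minPrefixPairing_eq_zero.1 hx] using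
    QWord.count_take_succ_fPow (i := i) k x p

lemma IsLattice.count_succ_fPow {x : List ℕ} (hx : IsLattice i x) {k : ℕ}
    (hk : k ≤ x.count i - x.count (i + 1)) :
    (fPow i k x).count (i + 1) = x.count (i + 1) + k := by
  have h₁ := QWord.count_succ_fPow (i := i) k x
  have h₂ := phiW_eq (i := i) x
  rw [isLattice_iff_minPrefixPairing_eq_zero.1 hx] at h₂
  omega

lemma isLattice_succ_fPow {x : List ℕ} (hx : IsLattice (i + 1) x) (k : ℕ) :
    IsLattice (i + 1) (fPow i k x) := fun p => by
  have h₁ := count_take_succ_fPow (i := i) k x p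
  have h₂ := count_take_fPow_of_ne (i := i) (b := i + 1 + 1) (by omega) (by omega) k x p
  have h₃ := minPrefixPairing_le_minPrefixPairingFrom (i := i) x p
  have h₄ := hx p
  simp only [prefixPairing] at h₄ ⊢
  omega

/-- The left side counts the letters raised by `f_i^k` among the first `p`; raising them adds at
least that much to the `(i + 1)`-pairing of every longer prefix. -/
lemma min_le_minPrefixPairingFrom_succ_fPow {x : List ℕ} (hx : IsLattice i x)
    (hx' : IsLattice (i + 1) x) (k p : ℕ) :
    min (k : ℤ) (minPrefixPairingFrom i x p) ≤ minPrefixPairingFrom (i + 1) (fPow i k x) p := by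
  refine le_minPrefixPairingFrom_iff.2 fun r => ?_
  have h₁ := hx.count_take_succ_fPow k (p + r)
  have h₂ := count_take_fPow_of_ne (i := i) (b := i + 1 + 1) (by omega) (by omega) k x (p + r)
  have h₃ := minPrefixPairingFrom_mono (i := i) x (Nat.le_add_right p r)
  have h₄ := hx' (p + r)
  simp only [prefixPairing] at h₄ ⊢
  omega

end Lattice

lemma reflect_succ_reflect {s : ℕ} {q : List ℕ} (hs : IsLattice s q) (hs' : IsLattice (s + 1) q)
    (heq : q.count (s + 1) = q.count (s + 2)) (hle : q.count (s + 1) ≤ q.count s) :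
    IsLattice s (reflect (s + 1) (reflect s q))
      ∧ (reflect (s + 1) (reflect s q)).count s = q.count (s + 1)
      ∧ (reflect (s + 1) (reflect s q)).count (s + 1) = q.count (s + 1)
      ∧ ∀ p, ((reflect (s + 1) (reflect s q)).take p).count s ≤ (q.take p).count s := by
  rw [show s + 2 = s + 1 + 1 from rfl] at heq
  rw [reflect_of_count_le hle]
  set d := q.count s - q.count (s + 1)
  have hq₁ : (fPow s d q).count (s + 1) = q.count (s + 1) + d := hs.count_succ_fPow le_rfl
  have hq₂ : (fPow s d q).count (s + 1 + 1) = q.count (s + 1 + 1) :=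
    count_fPow_of_ne (by omega) (by omega) d q
  have hq := count_fPow_add (i := s) d q
  have hq' : IsLattice (s + 1) (fPow s d q) := isLattice_succ_fPow hs' d
  rw [reflect_of_count_le (i := s + 1) (u := fPow s d q) (by omega),
    show (fPow s d q).count (s + 1) - (fPow s d q).count (s + 1 + 1) = d by omega]
  have hv₂ : (fPow (s + 1) d (fPow s d q)).count (s + 1 + 1)
      = (fPow s d q).count (s + 1 + 1) + d :=
    hq'.count_succ_fPow (by omega)
  have hv := count_fPow_add (i := s + 1) d (fPow s d q)
  have hv₀ := count_fPow_of_ne (i := s + 1) (b := s) (by omega) (by omega) d (fPow s d q)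
  have hm : ∀ p, 0 ≤ minPrefixPairingFrom s q p := fun p => by
    simpa [isLattice_iff_minPrefixPairing_eq_zero.1 hs] using
      minPrefixPairing_le_minPrefixPairingFrom (i := s) q p
  refine ⟨fun p => ?_, by omega, by omega, fun p => ?_⟩
  · have h₁ := hs.count_take_succ_fPow d p
    have h₂ := count_take_fPow_add (i := s) d q p
    have h₃ := hq'.count_take_succ_fPow d p
    have h₄ := count_take_fPow_add (i := s + 1) d (fPow s d q) p
    have h₅ := count_take_fPow_of_ne (i := s + 1) (b := s) (by omega) (by omega) d
      (fPow s d q) p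
    have h₆ := min_le_minPrefixPairingFrom_succ_fPow hs hs' d p
    have h₇ := minPrefixPairingFrom_le_prefixPairing (i := s) q p
    have h₈ := hm p
    simp only [prefixPairing] at h₇ ⊢
    omega
  · have h₁ := hs.count_take_succ_fPow d p
    have h₂ := count_take_fPow_add (i := s) d q p
    have h₅ := count_take_fPow_of_ne (i := s + 1) (b := s) (by omega) (by omega) d
      (fPow s d q) p
    have h₈ := hm p
    omega

/-- The reduced word `wiList (j + 1)` of `w_{j+1}` with every letter shifted by `s`. -/
def wiListShift (s j : ℕ) : List ℕ := List.range' (s + 1) j ++ List.range' s j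

lemma wiListShift_zero (j : ℕ) : wiListShift 0 j = wiList (j + 1) := by
  simp [wiListShift, wiList, List.range'_eq_map_range, Nat.add_comm]

lemma foldr_reflect_wiListShift_succ (s j : ℕ) (u : List ℕ) :
    (wiListShift s (j + 1)).foldr reflect u
      = reflect (s + 1) (reflect s ((wiListShift (s + 1) j).foldr reflect u)) := by
  simp only [wiListShift, List.range'_succ, List.cons_append, List.foldr_cons, List.foldr_append]
  rw [foldr_reflect_comm]
  intro m hm
  simp only [List.mem_range'] at hm
  omega

lemma foldr_reflect_wiListShift (j : ℕ) {s : ℕ} {u : List ℕ} (hu : ∀ m, s ≤ m → IsLattice m u)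
    (heq : u.count (s + j) = u.count (s + j + 1)) :
    IsLattice s ((wiListShift s j).foldr reflect u)
      ∧ ((wiListShift s j).foldr reflect u).count s = u.count (s + j + 1)
      ∧ ((wiListShift s j).foldr reflect u).count (s + 1) = u.count (s + j + 1)
      ∧ ∀ p, (((wiListShift s j).foldr reflect u).take p).count s ≤ (u.take p).count s := by
  induction j generalizing s with
  | zero => simpa [wiListShift] using ⟨hu s le_rfl, heq⟩
  | succ j ih =>
    have hanti : Antitone fun k => u.count (s + k) :=
      antitone_nat_of_succ_le fun k => (hu (s + k) (by omega)).count_succ_le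
    have hlast : u.count (s + (j + 1) + 1) ≤ u.count s := hanti (Nat.zero_le (j + 1 + 1))
    have hj : s + 1 + j = s + (j + 1) := by omega
    obtain ⟨h₁, h₂, h₃, h₄⟩ := ih (s := s + 1) (fun m hm => hu m (by omega)) (by rwa [hj])
    rw [hj] at h₂ h₃
    rw [foldr_reflect_wiListShift_succ]
    set w := (wiListShift (s + 1) j).foldr reflect u
    have hw : ∀ p, (w.take p).count s = (u.take p).count s :=
      count_take_foldr_reflect_of_lt (fun m hm => by
        simp only [wiListShift, List.mem_append, List.mem_range'] at hm
        omega) u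
    have hws : IsLattice s w := fun p => by
      have := hu s le_rfl p
      have := h₄ p
      have := hw p
      simp only [prefixPairing] at *
      omega
    have hws₀ : w.count s = u.count s := by
      simpa [List.take_of_length_le] using hw (max w.length u.length)
    obtain ⟨k₁, k₂, k₃, k₄⟩ := reflect_succ_reflect hws h₁ (h₂.trans h₃.symm) (by omega)
    exact ⟨k₁, by omega, by omega, fun p => (k₄ p).trans (hw p).le⟩

lemma ebarW_ne_none_of_count_drop_le {v : List ℕ}
    (hv : ∀ p, (v.drop p).count 0 ≤ (v.drop p).count 1) (hpos : 0 < v.count 1) :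
    ebarW v ≠ none := by
  induction v with
  | nil => simp at hpos
  | cons a w ih =>
    rw [ebarW]
    by_cases hw : w.count 0 = 0 ∧ w.count 1 = 0
    · obtain rfl : a = 1 := by
        by_contra ha
        simp [hw.2, ha] at hpos
      simp [hw]
    · have h₁ : w.count 0 ≤ w.count 1 := by simpa using hv 1
      rw [if_neg hw, ne_eq, Option.map_eq_none_iff]
      exact ih (fun p => by simpa using hv (p + 1)) (by omega)

lemma ebarW_ne_none {v : List ℕ} (hv : IsLattice 0 v) (heq : v.count 0 = v.count 1)
    (hpos : 0 < v.count 1) : ebarW v ≠ none := by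
  refine ebarW_ne_none_of_count_drop_le (fun p => ?_) hpos
  have h₀ := congrArg (List.count 0) (List.take_append_drop p v)
  have h₁ := congrArg (List.count 1) (List.take_append_drop p v)
  have := hv p
  rw [List.count_append] at h₀ h₁
  simp only [prefixPairing, Nat.zero_add] at this
  omega

lemma ebarWi_ne_none {j : ℕ} {b : List ℕ}
    (h : ebarW ((wiList (j + 1)).foldr reflect b) ≠ none) : ebarWi j b ≠ none := by
  obtain ⟨y, hy⟩ := Option.ne_none_iff_exists'.1 h
  simp [ebarWi, applySeq_eq_some, hy]

lemma isLattice_of_eW_eq_none {i : ℕ} {x : List ℕ} (h : eW i x = none) : IsLattice i x := by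
  rw [isLattice_iff_epsW_eq_zero]
  by_contra hne
  rw [eW_eq_some (by omega)] at h
  exact Option.some_ne_none _ h

end QWord

open QWord

/-- if `b` is a highest weight vector in the `q(n)`-crystal
`𝐁^{⊗N}` (all letters `< n`, killed by all even operators `eᵢ` and all odd
operators `ēᵢ`), then `wt b` — the vector of letter multiplicities — is a
strict partition: `λ₁ > λ₂ > ⋯ > λ_r > 0 = λ_{r+1} = ⋯ = λ_n`, i.e. each
nonzero entry is strictly smaller than its predecessor. -/
theorem stmt_9 (n : ℕ) (b : List ℕ) (hletters : ∀ a ∈ b, a < n)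
    (he : ∀ i, i + 1 < n → eW i b = none)
    (hebar : ∀ i, i + 1 < n → ebarWi i b = none) :
    ∀ j, j + 1 < n → 0 < b.count (j + 1) → b.count (j + 1) < b.count j := by
  intro j hj hpos
  have hlat : ∀ m, IsLattice m b := fun m => by
    by_cases hm : m + 1 < n
    · exact isLattice_of_eW_eq_none (he m hm)
    · exact isLattice_of_succ_not_mem fun hmem => hm (hletters _ hmem)
  by_contra hle
  have heq : b.count j = b.count (j + 1) := le_antisymm (not_lt.1 hle) (hlat j).count_succ_le
  obtain ⟨hv, hv₀, hv₁, -⟩ :=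
    foldr_reflect_wiListShift j (s := 0) (fun m _ => hlat m) (by simpa using heq)
  rw [wiListShift_zero] at hv hv₀ hv₁
  simp only [Nat.zero_add] at hv₀ hv₁
  exact ebarWi_ne_none (ebarW_ne_none hv (by omega) (by omega)) (hebar j hj)
end

section
/- Let b be a word in B^{⊗N} (letters 1,...,n) with ε_1(b) = 0 (i.e., e_1 b = 0) whose weight has equal positive first and second coordinates: ⟨k_1, wt b⟩ = ⟨k_2, wt b⟩ > 0. Then ē_1 b ≠ 0. -/
open QWord

/-!
Since `ε₁(b) = 0`, the same holds for every prefix of `b`, and `ε₁ ≥ -⟨h₁, wt⟩` then says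
that every prefix has at least as many letters `1` as letters `2`. If the rightmost letter
of `b` in `{1, 2}` were a `1`, the prefix ending just before it would contain all the `2`s
of `b` but one `1` fewer, so `b` would have more `1`s than `2`s.
-/

namespace QWord

theorem epsW_eq_zero_of_eW_eq_none {i : ℕ} : ∀ {b : List ℕ}, eW i b = none → epsW i b = 0
  | [], _ => rfl
  | a :: w, h => by
    unfold eW at h
    split_ifs at h with hw
    · have ha : a ≠ i + 1 := by simpa [eL] using h
      simp only [epsW, epsL, if_neg ha]
      omega
    · have := epsW_eq_zero_of_eW_eq_none (Option.map_eq_none_iff.mp h)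
      omega

theorem count_succ_le_count_add_epsW (i : ℕ) :
    ∀ b : List ℕ, b.count (i + 1) ≤ b.count i + epsW i b
  | [] => le_rfl
  | a :: w => by
    have := count_succ_le_count_add_epsW i w
    simp only [List.count_cons, epsW, epsL, phiL, beq_iff_eq]
    split_ifs <;> omega

theorem epsW_le_epsW_append (i : ℕ) (v : List ℕ) :
    ∀ u : List ℕ, epsW i u ≤ epsW i (u ++ v)
  | [] => Nat.zero_le _
  | a :: u => by
    have := epsW_le_epsW_append i v u
    simp only [List.cons_append, epsW]
    omega

theorem exists_eq_append_zero_cons_of_ebarW_eq_none :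
    ∀ {b : List ℕ}, ebarW b = none → (0 ∈ b ∨ 1 ∈ b) →
      ∃ u v, b = u ++ 0 :: v ∧ 0 ∉ v ∧ 1 ∉ v
  | [], _, hb => by simp at hb
  | a :: w, h, hb => by
    unfold ebarW at h
    simp only [List.count_eq_zero] at h
    split_ifs at h with hw ha
    · simp at h
    · have : a = 0 := by grind
      exact ⟨[], w, by simp [this], hw⟩
    · obtain ⟨u, v, rfl, hv⟩ :=
        exists_eq_append_zero_cons_of_ebarW_eq_none (Option.map_eq_none_iff.mp h) (by tauto)
      exact ⟨a :: u, v, rfl, hv⟩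

end QWord

/-- if a word `b` satisfies `ε₁(b) = 0` (i.e. `e₁ b = 0`) and its
weight has equal positive first and second coordinates
(`⟨k₁, wt b⟩ = ⟨k₂, wt b⟩ > 0`, i.e. equally many letters `1` and `2`, here
`0` and `1`), then `ē₁ b ≠ 0`. -/
theorem stmt_10 (b : List ℕ) (h1 : eW 0 b = none)
    (h2 : b.count 0 = b.count 1) (h3 : 0 < b.count 0) :
    ebarW b ≠ none := by
  intro hbar
  obtain ⟨u, v, rfl, h0v, h1v⟩ :=
    exists_eq_append_zero_cons_of_ebarW_eq_none hbar (Or.inl (List.count_pos_iff.mp h3))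
  have hu : epsW 0 u = 0 :=
    Nat.eq_zero_of_le_zero ((epsW_le_epsW_append 0 _ u).trans (epsW_eq_zero_of_eW_eq_none h1).le)
  have hcount : u.count 1 ≤ u.count 0 + epsW 0 u := count_succ_le_count_add_epsW 0 u
  simp only [List.count_append, List.count_cons_self,
    List.count_cons_of_ne (by decide : (0 : ℕ) ≠ 1), List.count_eq_zero_of_not_mem h0v, List.count_eq_zero_of_not_mem h1v] at h2
  omega
end

section
/- For a strict partition λ = (λ_1 > λ_2 > ... > λ_r > 0), the shifted skew Young diagram Y_λ (with λ_1 boxes on the main diagonal, λ_2 on the second diagonal, etc.) has a unique semistandard tableau of weight λ with entries in {1,...,n} (n ≥ r), and its weight λ is maximal in the set of weights of all semistandard tableaux of shape Y_λ, i.e., λ + α_i is not a weight for any simple root α_i. -/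
/-!
For a strict partition `λ = (λ₁ > ⋯ > λ_r > 0)` (here a function
`lam : ℕ → ℕ`, `0`-based), the skew Young diagram `Y_λ` has `λ_k` boxes on its
`k`-th diagonal.  We coordinatize the boxes of `Y_λ` by pairs `(t, s)`
(`0`-based): box `(t, s)` is the `s`-th box of the `t`-th diagonal; it sits in
row `t + s` and, moving one step to the right along a row, `(t, s+1)` is
replaced by `(t+1, s)`; the box directly below `(t, s)` is `(t+1, s)`... more
precisely `(t, s)` and `(t+1, s)` share a column, with `(t+1, s)` one row
lower, and `(t, s+1)` and `(t+1, s)` share a row, with `(t+1, s)` one column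
further right.  Entries are `0`-based: entry `j` stands for the letter `j+1`.
-/

/-- A semistandard tableau of shape `Y_lam` with entries in `{0, …, n-1}`:
rows weakly increase (left to right) and columns strictly increase (downwards). -/
def IsSSYT (n : ℕ) (lam : ℕ → ℕ) (T : ℕ → ℕ → ℕ) : Prop :=
  (∀ t s, s < lam t → T t s < n) ∧
  (∀ t s, s + 1 < lam t → s < lam (t + 1) → T t (s + 1) ≤ T (t + 1) s) ∧
  (∀ t s, s < lam t → s < lam (t + 1) → T t s < T (t + 1) s)

/-- The weight of a tableau: `wtT r lam T j` is the number of boxes of `Y_lam`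
(whose diagonals are indexed by `t < r`) with entry `j`. -/
def wtT (r : ℕ) (lam : ℕ → ℕ) (T : ℕ → ℕ → ℕ) (j : ℕ) : ℕ :=
  ∑ t ∈ Finset.range r, ((Finset.range (lam t)).filter (fun s => T t s = j)).card

/-!
Column strictness forces every entry on the `t`-th diagonal to be at least `t`. Hence the
boxes with entries `< m` lie on the first `m` diagonals, so the weight `μ` of any
semistandard tableau satisfies `μ₀ + ⋯ + μ_{m-1} ≤ λ₀ + ⋯ + λ_{m-1}`, with strict inequality
as soon as one of those diagonals carries an entry `≥ m`. The weight `λ + αᵢ` violates the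
inequality at `m = i + 1`, and a tableau of weight `λ` must have all of diagonal `t` equal
to `t`.
-/

open Finset

variable {n r : ℕ} {lam : ℕ → ℕ} {T : ℕ → ℕ → ℕ}

lemma antitone_of_lt_of_eq_zero (hstrict : ∀ t, t + 1 < r → lam (t + 1) < lam t)
    (hzero : ∀ t, r ≤ t → lam t = 0) : Antitone lam := by
  refine antitone_nat_of_succ_le fun t => ?_
  by_cases ht : t + 1 < r
  · exact (hstrict t ht).le
  · simp [hzero (t + 1) (not_lt.1 ht)]

lemma lt_of_lt_apply (hzero : ∀ t, r ≤ t → lam t = 0) {t s : ℕ} (hs : s < lam t) : t < r := by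
  by_contra ht
  simp [hzero t (not_lt.1 ht)] at hs

lemma isSSYT_diag (hrn : r ≤ n) (hzero : ∀ t, r ≤ t → lam t = 0) :
    IsSSYT n lam (fun t _ => t) :=
  ⟨fun _ _ hs => (lt_of_lt_apply hzero hs).trans_le hrn, fun t _ _ _ => t.le_succ,
    fun t _ _ _ => t.lt_succ_self⟩

lemma wtT_diag (hzero : ∀ t, r ≤ t → lam t = 0) (j : ℕ) :
    wtT r lam (fun t _ => t) j = lam j := by
  simp only [wtT, filter_const, apply_ite card, card_range, card_empty]
  rw [sum_ite_eq' (range r) j lam, ite_eq_left_iff]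
  exact fun hj => (hzero j (by simpa using hj)).symm

lemma IsSSYT.le_apply (hlam : Antitone lam) (hT : IsSSYT n lam T) {t s : ℕ}
    (hs : s < lam t) : t ≤ T t s := by
  induction t generalizing s with
  | zero => exact Nat.zero_le _
  | succ t ih =>
    have hs' : s < lam t := hs.trans_le (hlam t.le_succ)
    exact (ih hs').trans_lt (hT.2.2 t s hs' hs)

lemma sum_range_wtT (r : ℕ) (lam : ℕ → ℕ) (T : ℕ → ℕ → ℕ) (m : ℕ) :
    ∑ j ∈ range m, wtT r lam T j = ∑ t ∈ range r, #{s ∈ range (lam t) | T t s < m} := by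
  simp only [wtT]
  rw [sum_comm]
  refine sum_congr rfl fun t _ => ?_
  simp only [card_filter]
  rw [sum_comm]
  simp [sum_ite_eq]

lemma sum_range_ite_le (f : ℕ → ℕ) (r m : ℕ) :
    ∑ t ∈ range r, (if t < m then f t else 0) ≤ ∑ t ∈ range m, f t := by
  rw [← sum_filter]
  exact sum_le_sum_of_subset fun t ht => by simp_all

lemma IsSSYT.card_filter_lt_le (hlam : Antitone lam) (hT : IsSSYT n lam T) (m t : ℕ) :
    #{s ∈ range (lam t) | T t s < m} ≤ if t < m then lam t else 0 := by
  split_ifs with htm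
  · exact (card_filter_le _ _).trans (card_range _).le
  · rw [Nat.le_zero, card_eq_zero, filter_eq_empty_iff]
    intro s hs
    have := hT.le_apply hlam (mem_range.1 hs)
    omega

lemma IsSSYT.sum_range_wtT_le (hlam : Antitone lam) (hT : IsSSYT n lam T) (m : ℕ) :
    ∑ j ∈ range m, wtT r lam T j ≤ ∑ j ∈ range m, lam j := by
  rw [sum_range_wtT]
  exact (sum_le_sum fun t _ => hT.card_filter_lt_le hlam m t).trans (sum_range_ite_le lam r m)

lemma IsSSYT.sum_range_wtT_lt (hlam : Antitone lam) (hT : IsSSYT n lam T) {m t s : ℕ}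
    (ht : t < r) (hs : s < lam t) (htm : t < m) (hmT : m ≤ T t s) :
    ∑ j ∈ range m, wtT r lam T j < ∑ j ∈ range m, lam j := by
  rw [sum_range_wtT]
  refine (sum_lt_sum (fun t _ => hT.card_filter_lt_le hlam m t) ⟨t, mem_range.2 ht, ?_⟩).trans_le
    (sum_range_ite_le lam r m)
  rw [if_pos htm]
  exact (card_lt_card (filter_ssubset.2 ⟨s, mem_range.2 hs, by simpa using hmT⟩)).trans_eq
    (card_range _)

lemma IsSSYT.eq_of_wtT_eq (hlam : Antitone lam) (hzero : ∀ t, r ≤ t → lam t = 0)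
    (hT : IsSSYT n lam T) (hw : ∀ j, wtT r lam T j = lam j) {t s : ℕ} (hs : s < lam t) :
    T t s = t := by
  refine le_antisymm (not_lt.1 fun h => ?_) (hT.le_apply hlam hs)
  have := hT.sum_range_wtT_lt hlam (lt_of_lt_apply hzero hs) hs t.lt_succ_self h
  simp only [hw, lt_irrefl] at this

lemma IsSSYT.wtT_le_of_forall_lt_eq (hlam : Antitone lam) (hT : IsSSYT n lam T) {i : ℕ}
    (hlt : ∀ j < i, wtT r lam T j = lam j) : wtT r lam T i ≤ lam i := by
  have := hT.sum_range_wtT_le (r := r) hlam (i + 1)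
  rwa [sum_range_succ, sum_range_succ, sum_congr rfl fun j hj => hlt j (mem_range.1 hj),
    add_le_add_iff_left] at this

theorem stmt_12_general (r n : ℕ) (hrn : r ≤ n) (lam : ℕ → ℕ)
    (hstrict : ∀ t, t + 1 < r → lam (t + 1) < lam t)
    (hzero : ∀ t, r ≤ t → lam t = 0) :
    (IsSSYT n lam (fun t _ => t) ∧ ∀ j, wtT r lam (fun t _ => t) j = lam j) ∧
    (∀ T T', IsSSYT n lam T → IsSSYT n lam T' →
      (∀ j, wtT r lam T j = lam j) → (∀ j, wtT r lam T' j = lam j) →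
      ∀ t s, s < lam t → T t s = T' t s) ∧
    (∀ (T : ℕ → ℕ → ℕ) (i : ℕ), IsSSYT n lam T → i + 1 < n →
      ¬ (wtT r lam T i = lam i + 1 ∧ wtT r lam T (i + 1) + 1 = lam (i + 1) ∧
          ∀ j, j ≠ i → j ≠ i + 1 → wtT r lam T j = lam j)) := by
  have hlam := antitone_of_lt_of_eq_zero hstrict hzero
  refine ⟨⟨isSSYT_diag hrn hzero, wtT_diag hzero⟩, fun T T' hT hT' hw hw' t s hs => ?_,
    fun T i hT _ ⟨hi, _, hw⟩ => ?_⟩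
  · rw [hT.eq_of_wtT_eq hlam hzero hw hs, hT'.eq_of_wtT_eq hlam hzero hw' hs]
  · have := hT.wtT_le_of_forall_lt_eq hlam fun j hj => hw j hj.ne (by omega)
    omega

/-- for a strict partition `λ` with `r` parts and `n ≥ r`:
(1) the tableau whose `t`-th diagonal is filled with the entry `t` is a
semistandard tableau of shape `Y_λ` and weight `λ`; (2) it is the unique such
tableau (any two agree on all boxes); (3) no semistandard tableau of shape
`Y_λ` has weight `λ + αᵢ = λ + εᵢ - ε_{i+1}` for any simple root `αᵢ`. -/
theorem stmt_12 (r n : ℕ) (hrn : r ≤ n) (lam : ℕ → ℕ)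
    (hpos : ∀ t, t < r → 0 < lam t)
    (hstrict : ∀ t, t + 1 < r → lam (t + 1) < lam t)
    (hzero : ∀ t, r ≤ t → lam t = 0) :
    (IsSSYT n lam (fun t _ => t) ∧ ∀ j, wtT r lam (fun t _ => t) j = lam j) ∧
    (∀ T T', IsSSYT n lam T → IsSSYT n lam T' →
      (∀ j, wtT r lam T j = lam j) → (∀ j, wtT r lam T' j = lam j) →
      ∀ t s, s < lam t → T t s = T' t s) ∧
    (∀ (T : ℕ → ℕ → ℕ) (i : ℕ), IsSSYT n lam T → i + 1 < n →
      ¬ (wtT r lam T i = lam i + 1 ∧ wtT r lam T (i + 1) + 1 = lam (i + 1) ∧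
          ∀ j, j ≠ i → j ≠ i + 1 → wtT r lam T j = lam j)) :=
  stmt_12_general r n hrn lam hstrict hzero
end

section
/- In B^{⊗N} with letters {1,...,n}, let b be a gl(n)-highest weight word (e_i b = 0 for all i) of weight μ (a partition), and let j be such that μ + ε_j is a partition. Write b_0 = 1 ⊗ f_1 f_2 ⋯ f_{j-1} b. Then b_0 is a gl(n)-highest weight word of weight μ + ε_j, and every gl(n)-highest weight word in {1} ⊗ B^{⊗N} ⊂ B^{⊗(N+1)} prepending a letter arises this way; that is, a word 1 ⊗ b' ∈ B^{⊗(N+1)} is gl(n)-highest weight if and only if b' = f_1 ⋯ f_{j-1} b for some gl(n)-highest weight word b and some j with wt(b) + ε_j a partition. -/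
open QWord

/-- `fseq j b = f₁ f₂ ⋯ f_j b` (in `0`-based indices `f₀ f₁ ⋯ f_{j-1} b`,
applying `f_{j-1}` first). -/
def fseq : ℕ → List ℕ → Option (List ℕ)
  | 0, b => some b
  | k + 1, b => (fW k b).bind (fseq k)

/-!
The signature rule gives `ε_i(1 ⊗ b') = 0` for all `i` exactly when `ε_i(b') ≤ δ_{i,1}`.
Starting from such a `b'`, apply `e_1, e_2, …` greedily: at stage `k` the word `y`
satisfies `ε_i(y) ≤ δ_{i,k}`; if `ε_k(y) = 0` then `y` is highest weight, and otherwise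
`e_k y` satisfies `ε_i ≤ δ_{i,k+1}`. The only delicate point is `ε_{k-1}(e_k e_{k-1} ⋯) = 0`,
which holds because `e_k` changes a letter to the right of the one changed by `e_{k-1}`.
Since `f_k e_k y = y`, undoing the steps gives `b' = f_1 ⋯ f_{j-1} b`.
Conversely, along `f_{j-1}, f_{j-2}, …` each `f_k` creates `ε_k = 1` and leaves the other `ε_i`
at `0`, except that `ε_{k+1}` could become `1`; it does not, because `f_k` changes a letter to
the left of the one changed by `f_{k+1}`. The partition condition holds because `f_{j-1} b ≠ 0`
forces `φ_{j-1}(b) > 0`.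
-/

theorem List.append_cons_eq_append_cons_iff {α : Type*} {u v u' v' : List α} {a a' : α} :
    u ++ a :: v = u' ++ a' :: v' ↔ (u = u' ∧ a = a' ∧ v = v') ∨
      (∃ m, u' = u ++ a :: m ∧ v = m ++ a' :: v') ∨
      ∃ m, u = u' ++ a' :: m ∧ v' = m ++ a :: v := by
  constructor
  · intro h
    rcases List.append_eq_append_iff.1 h with
      ⟨_ | ⟨x, m⟩, rfl, hm⟩ | ⟨_ | ⟨x, m⟩, rfl, hm⟩
    all_goals simp_all
  · rintro (⟨rfl, rfl, rfl⟩ | ⟨m, rfl, rfl⟩ | ⟨m, rfl, rfl⟩) <;> simp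

namespace QWord

variable {n i j k : ℕ} {u v w w' y z b b' d : List ℕ}

lemma epsW_cons (i a : ℕ) (w : List ℕ) :
    epsW i (a :: w) =
      if a = i then epsW i w - 1 else if a = i + 1 then epsW i w + 1 else epsW i w := by
  simp only [epsW, epsL, phiL]
  split_ifs <;> omega

lemma epsW_cons_self (i : ℕ) (w : List ℕ) : epsW i (i :: w) = epsW i w - 1 := by
  simp [epsW_cons]

lemma epsW_cons_succ (i : ℕ) (w : List ℕ) : epsW i ((i + 1) :: w) = epsW i w + 1 := by
  simp [epsW_cons]

lemma epsW_cons_of_ne {a : ℕ} (h : a ≠ i) (h' : a ≠ i + 1) : epsW i (a :: w) = epsW i w := by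
  simp [epsW_cons, h, h']

lemma epsW_append (i : ℕ) (u v : List ℕ) :
    epsW i (u ++ v) = max (epsW i u) (epsW i v + u.count (i + 1) - u.count i) := by
  induction u with
  | nil => simp [epsW]
  | cons a u ih =>
    simp only [List.cons_append, epsW_cons, ih, List.count_cons, beq_iff_eq]
    split_ifs <;> omega

lemma epsW_le_count_succ (i : ℕ) (w : List ℕ) : epsW i w ≤ w.count (i + 1) := by
  induction w with
  | nil => simp [epsW]
  | cons a w ih =>
    simp only [epsW_cons, List.count_cons, beq_iff_eq]
    split_ifs <;> omega

lemma count_succ_le_epsW_add_count (i : ℕ) (w : List ℕ) :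
    w.count (i + 1) ≤ epsW i w + w.count i := by
  have := epsW_append i w []
  simp only [List.append_nil, epsW, zero_add] at this
  omega

lemma epsW_eq_zero_of_forall_lt (hw : ∀ a ∈ w, a < n) (hi : n ≤ i + 1) : epsW i w = 0 := by
  have : w.count (i + 1) = 0 := List.count_eq_zero.2 fun h => by have := hw _ h; omega
  have := epsW_le_count_succ i w
  omega

lemma epsW_append_cons_le {x x' c : ℕ} (h : epsW k (x :: v) ≤ epsW k (x' :: v) + c) :
    epsW k (u ++ x :: v) ≤ epsW k (u ++ x' :: v) + c := by
  rw [epsW_append, epsW_append]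
  omega

lemma eW_eq_none_iff : eW i w = none ↔ epsW i w = 0 := by
  induction w with
  | nil => simp [eW, epsW]
  | cons a w ih =>
    simp only [eW, epsW_cons, eL, phiL]
    split_ifs
    all_goals simp_all
    all_goals omega

lemma eW_cons_eq_some {a : ℕ} (h : eW i (a :: w) = some w') :
    (a = i + 1 ∧ epsW i w = 0 ∧ w' = i :: w) ∨
      ((if a = i then 1 else 0) < epsW i w ∧ ∃ t, eW i w = some t ∧ w' = a :: t) := by
  rw [eW] at h
  split_ifs at h with hc
  · obtain ⟨b, hb, rfl⟩ := Option.map_eq_some_iff.1 h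
    simp only [eL, Option.ite_none_right_eq_some, Option.some.injEq] at hb
    obtain ⟨rfl, rfl⟩ := hb
    simp only [phiL, Nat.succ_ne_self, if_false, Nat.le_zero] at hc
    exact .inl ⟨rfl, hc, rfl⟩
  · obtain ⟨t, ht, rfl⟩ := Option.map_eq_some_iff.1 h
    simp only [phiL] at hc
    exact .inr ⟨by omega, t, ht, rfl⟩

lemma fW_cons_eq_some {a : ℕ} (h : fW i (a :: w) = some w') :
    (a = i ∧ epsW i w = 0 ∧ w' = (i + 1) :: w) ∨
      ((a = i → 1 ≤ epsW i w) ∧ ∃ t, fW i w = some t ∧ w' = a :: t) := by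
  rw [fW] at h
  split_ifs at h with hc
  · obtain ⟨b, hb, rfl⟩ := Option.map_eq_some_iff.1 h
    simp only [fL, Option.ite_none_right_eq_some, Option.some.injEq] at hb
    obtain ⟨rfl, rfl⟩ := hb
    simp only [phiL, if_true, Nat.lt_one_iff] at hc
    exact .inl ⟨rfl, hc, rfl⟩
  · obtain ⟨t, ht, rfl⟩ := Option.map_eq_some_iff.1 h
    refine .inr ⟨fun ha => ?_, t, ht, rfl⟩
    simp only [phiL, ha, if_true] at hc
    omega

lemma exists_of_eW_eq_some (h : eW i w = some w') :
    ∃ u v, w = u ++ (i + 1) :: v ∧ w' = u ++ i :: v ∧ epsW i v = 0 := by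
  induction w generalizing w' with
  | nil => simp [eW] at h
  | cons a w ih =>
    obtain ⟨rfl, hw, rfl⟩ | ⟨-, t, ht, rfl⟩ := eW_cons_eq_some h
    · exact ⟨[], w, rfl, rfl, hw⟩
    · obtain ⟨u, v, rfl, rfl, hv⟩ := ih ht
      exact ⟨a :: u, v, rfl, rfl, hv⟩

lemma epsW_eq_add_one_of_eW_eq_some (h : eW i w = some w') : epsW i w = epsW i w' + 1 := by
  induction w generalizing w' with
  | nil => simp [eW] at h
  | cons a w ih =>
    obtain ⟨rfl, hw, rfl⟩ | ⟨hw, t, ht, rfl⟩ := eW_cons_eq_some h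
    · rw [epsW_cons_succ, epsW_cons_self]
      omega
    · have := ih ht
      simp only [epsW_cons] at hw ⊢
      split_ifs at hw ⊢ <;> omega

lemma fW_of_eW_eq_some (h : eW i w = some w') : fW i w' = some w := by
  induction w generalizing w' with
  | nil => simp [eW] at h
  | cons a w ih =>
    obtain ⟨rfl, hw, rfl⟩ | ⟨hw, t, ht, rfl⟩ := eW_cons_eq_some h
    · simp [fW, fL, phiL, hw]
    · have := epsW_eq_add_one_of_eW_eq_some ht
      simp only [fW, ih ht, phiL]
      split_ifs at hw ⊢ <;> first | omega | rfl

lemma exists_of_fW_eq_some (h : fW i w = some w') :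
    ∃ u v, w = u ++ i :: v ∧ w' = u ++ (i + 1) :: v ∧ epsW i v = 0 ∧
      ∀ u₁ u₂, u = u₁ ++ i :: u₂ → 1 ≤ epsW i (u₂ ++ i :: v) := by
  induction w generalizing w' with
  | nil => simp [fW] at h
  | cons a w ih =>
    obtain ⟨rfl, hw, rfl⟩ | ⟨hw, t, ht, rfl⟩ := fW_cons_eq_some h
    · exact ⟨[], w, rfl, rfl, hw, by simp⟩
    · obtain ⟨u, v, rfl, rfl, hv, hu⟩ := ih ht
      refine ⟨a :: u, v, rfl, rfl, hv, fun u₁ u₂ hsplit => ?_⟩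
      cases u₁ with
      | nil =>
        obtain ⟨rfl, rfl⟩ := List.cons.inj hsplit
        exact hw rfl
      | cons x u₁ => exact hu u₁ u₂ (List.cons.inj hsplit).2

lemma epsW_eq_add_one_of_fW_eq_some (h : fW i w = some w') : epsW i w' = epsW i w + 1 := by
  induction w generalizing w' with
  | nil => simp [fW] at h
  | cons a w ih =>
    obtain ⟨rfl, hw, rfl⟩ | ⟨hw, t, ht, rfl⟩ := fW_cons_eq_some h
    · rw [epsW_cons_succ, epsW_cons_self]
      omega
    · have := ih ht
      simp only [epsW_cons]
      split_ifs <;> omega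

lemma epsW_le_of_eW_eq_some (hk : k ≠ i + 1) (hk' : k + 1 ≠ i) (h : eW i w = some w') :
    epsW k w' ≤ epsW k w := by
  obtain ⟨u, v, rfl, rfl, -⟩ := exists_of_eW_eq_some h
  refine epsW_append_cons_le (c := 0) ?_
  simp only [epsW_cons]
  split_ifs <;> omega

lemma epsW_succ_le_of_eW_eq_some (h : eW i w = some w') :
    epsW (i + 1) w' ≤ epsW (i + 1) w + 1 := by
  obtain ⟨u, v, rfl, rfl, -⟩ := exists_of_eW_eq_some h
  refine epsW_append_cons_le ?_
  simp only [epsW_cons]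
  split_ifs <;> omega

lemma epsW_le_of_fW_eq_some (hk : k ≠ i) (h : fW i w = some w') : epsW k w' ≤ epsW k w := by
  obtain ⟨u, v, rfl, rfl, -⟩ := exists_of_fW_eq_some h
  refine epsW_append_cons_le (c := 0) ?_
  simp only [epsW_cons]
  split_ifs <;> omega

lemma count_succ_lt_count_of_fW_eq_some (hw : epsW i w = 0) (h : fW i w = some w') :
    w.count (i + 1) < w.count i := by
  have hε := epsW_eq_add_one_of_fW_eq_some h
  have hcount := count_succ_le_epsW_add_count i w'
  obtain ⟨u, v, rfl, rfl, -⟩ := exists_of_fW_eq_some h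
  simp only [List.count_append, List.count_cons_self, ne_eq, Nat.add_eq_left, one_ne_zero,
    not_false_eq_true, List.count_cons_of_ne, Nat.left_eq_add] at hcount ⊢
  omega

lemma exists_eq_append_cons_epsW_eq_zero {α : List ℕ}
    (h : α.count (i + 1) + epsW i w + 1 ≤ α.count i) :
    ∃ α₁ α₂, α = α₁ ++ i :: α₂ ∧ epsW i (α₂ ++ w) = 0 := by
  induction α using List.reverseRecOn generalizing w with
  | nil => simp at h
  | append_singleton α a ih =>
    by_cases hdone : a = i ∧ epsW i w = 0
    · exact ⟨α, [], by rw [hdone.1], by simpa using hdone.2⟩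
    · obtain ⟨α₁, α₂, rfl, h₂⟩ := ih (w := a :: w) (by
        simp only [List.count_append, List.count_singleton, beq_iff_eq, epsW_cons] at h ⊢
        split_ifs at h ⊢ <;> omega)
      exact ⟨α₁, α₂ ++ [a], by simp, by simpa using h₂⟩

/-- The letter `k + 2` changed by `e_{k+1}` lies to the right of the letter `k` produced by
`e_k`, so the new `k + 1` is preceded by that `k`. -/
lemma epsW_eq_zero_of_eW_eW (h₁ : eW k d = some y) (h₂ : eW (k + 1) y = some z)
    (hy : epsW k y = 0) (hd : epsW (k + 1) d = 0) : epsW k z = 0 := by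
  have hy₁ := epsW_eq_add_one_of_eW_eq_some h₂
  obtain ⟨g, h, rfl, rfl, hh⟩ := exists_of_eW_eq_some h₁
  obtain ⟨G, H, hgh, rfl, hH⟩ := exists_of_eW_eq_some h₂
  rcases List.append_cons_eq_append_cons_iff.1 hgh with
    ⟨-, hk, -⟩ | ⟨m, rfl, rfl⟩ | ⟨m, rfl, rfl⟩
  · omega
  · simp only [List.append_assoc, List.cons_append, epsW_append, epsW_cons] at *
    split_ifs at * <;> omega
  · simp only [List.append_assoc, List.cons_append, epsW_append, epsW_cons] at *
    split_ifs at * <;> omega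

/-- Since `d` is `k`-lattice, the prefix `α` before the letter `k + 1` changed by `f_{k+1}`
contains a `k` followed by a `k`-lattice word; so `f_k`, which acts on the leftmost such `k`,
acts inside `α`, and the `k + 1` it creates cancels the new `k + 2`. -/
lemma epsW_succ_eq_zero_of_fW_fW (h₁ : fW (k + 1) d = some y) (h₂ : fW k y = some z)
    (hd₁ : epsW (k + 1) d = 0) (hd₀ : epsW k d = 0) : epsW (k + 1) z = 0 := by
  obtain ⟨α, β, rfl, rfl, hβ, -⟩ := exists_of_fW_eq_some h₁
  have hα : α.count (k + 1) + epsW k ((k + 1 + 1) :: β) + 1 ≤ α.count k := by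
    rw [epsW_append, epsW_cons_succ] at hd₀
    rw [epsW_cons_of_ne (by omega) (by omega)]
    omega
  obtain ⟨α₁, α₂, hα₁₂, hα₂⟩ := exists_eq_append_cons_epsW_eq_zero hα
  obtain ⟨g, h, hgh, rfl, hh, hg⟩ := exists_of_fW_eq_some h₂
  rcases List.append_cons_eq_append_cons_iff.1 hgh with
    ⟨-, hk, -⟩ | ⟨m, rfl, rfl⟩ | ⟨m, rfl, rfl⟩
  · omega
  · have := hg α₁ (α₂ ++ (k + 1 + 1) :: m) (by simp [hα₁₂])
    simp only [List.append_assoc, List.cons_append] at this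
    omega
  · simp only [List.append_assoc, List.cons_append, epsW_append, epsW_cons] at *
    split_ifs at * <;> omega

lemma forall_eW_eq_none_iff (hw : ∀ a ∈ w, a < n) :
    (∀ i, i + 1 < n → eW i w = none) ↔ ∀ i, epsW i w = 0 := by
  refine forall_congr' fun i => ?_
  rw [eW_eq_none_iff]
  exact ⟨fun h => if hi : i + 1 < n then h hi else epsW_eq_zero_of_forall_lt hw (by omega),
    fun h _ => h⟩

lemma forall_epsW_cons_zero_eq_zero_iff :
    (∀ i, epsW i (0 :: w) = 0) ↔ ∀ i, epsW i w ≤ if i = 0 then 1 else 0 := by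
  refine forall_congr' fun i => ?_
  rcases i with _ | i
  · simp only [epsW_cons, ↓reduceIte]
    omega
  · simp [epsW_cons]

/-- `hpos` records that `y` was produced by `e_{k-1}`; without it `e_k y` could have
`ε_{k-1} = 1`. -/
theorem exists_fseq_eq_some_of_epsW_le (k : ℕ) (y : List ℕ)
    (hy : ∀ i, epsW i y ≤ if i = k then 1 else 0)
    (hpos : ∀ i, k = i + 1 → ∃ d, eW i d = some y ∧ epsW k d = 0)
    (hf : fseq k y = some b') (hyn : ∀ a ∈ y, a < n) (hk : k < n) :
    ∃ j b, j < n ∧ (∀ a ∈ b, a < n) ∧ (∀ i, epsW i b = 0) ∧ fseq j b = some b' := by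
  cases hε : eW k y with
  | none =>
    refine ⟨k, y, hk, hyn, fun i => ?_, hf⟩
    rcases eq_or_ne i k with rfl | hi
    · exact eW_eq_none_iff.1 hε
    · simpa [hi] using hy i
  | some y' =>
    obtain ⟨u, v, rfl, rfl, -⟩ := exists_of_eW_eq_some hε
    have hk' : k + 1 < n := hyn (k + 1) (by simp)
    refine exists_fseq_eq_some_of_epsW_le (k + 1) (u ++ k :: v) (fun i => ?_) ?_ ?_ ?_ hk'
    · have hyi : i ≠ k → epsW i (u ++ (k + 1) :: v) = 0 := fun hik => by simpa [hik] using hy i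
      rcases eq_or_ne i k with rfl | hik
      · have := epsW_eq_add_one_of_eW_eq_some hε
        simpa [this] using hy i
      rcases eq_or_ne i (k + 1) with rfl | hik₁
      · simpa [hyi hik] using epsW_succ_le_of_eW_eq_some hε
      rw [if_neg hik₁, Nat.le_zero]
      by_cases hik₂ : k = i + 1
      · subst hik₂
        obtain ⟨d, hd, hd₀⟩ := hpos i rfl
        exact epsW_eq_zero_of_eW_eW hd hε (hyi hik) hd₀
      · exact Nat.eq_zero_of_le_zero
          (hyi hik ▸ epsW_le_of_eW_eq_some hik₁ (Ne.symm hik₂) hε)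
    · rintro i ⟨⟩
      exact ⟨_, hε, by simpa using hy (k + 1)⟩
    · simp [fseq, fW_of_eW_eq_some hε, hf]
    · intro a ha
      simp only [List.mem_append, List.mem_cons] at ha hyn
      rcases ha with ha | rfl | ha
      · exact hyn a (.inl ha)
      · omega
      · exact hyn a (.inr (.inr ha))
termination_by n - k

theorem epsW_le_of_fseq_eq_some : ∀ (k : ℕ) (y : List ℕ), (∀ i ≠ k, epsW i y = 0) →
    (epsW k y = 0 ∨ ∃ d, fW k d = some y ∧ epsW k d = 0 ∧ epsW (k - 1) d = 0) →
    fseq k y = some b' → ∀ i, epsW i b' ≤ if i = 0 then 1 else 0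
  | 0, y, hy, hy₀, hf, i => by
    obtain rfl : y = b' := Option.some.inj hf
    rcases eq_or_ne i 0 with rfl | hi
    · rcases hy₀ with hy₀ | ⟨d, hd, hd₀, -⟩
      · simp [hy₀]
      · simp [epsW_eq_add_one_of_fW_eq_some hd, hd₀]
    · simp [hy i hi]
  | k + 1, y, hy, hyk, hf, i => by
    obtain ⟨z, hz, hf⟩ := Option.bind_eq_some_iff.1 hf
    refine epsW_le_of_fseq_eq_some k z (fun i hi => ?_)
      (.inr ⟨y, hz, hy k (by omega), hy (k - 1) (by omega)⟩) hf i
    rcases eq_or_ne i (k + 1) with rfl | hik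
    · rcases hyk with hy₁ | ⟨d, hd, hd₁, hd₀⟩
      · exact Nat.eq_zero_of_le_zero (hy₁ ▸ epsW_le_of_fW_eq_some hi hz)
      · exact epsW_succ_eq_zero_of_fW_fW hd hz hd₁ hd₀
    · exact Nat.eq_zero_of_le_zero (hy i hik ▸ epsW_le_of_fW_eq_some hi hz)

lemma count_lt_count_pred_of_fseq_eq_some (hb : ∀ i, epsW i b = 0) (hf : fseq j b = some b') :
    j = 0 ∨ b.count j < b.count (j - 1) := by
  rcases j with _ | j
  · exact .inl rfl
  · obtain ⟨c, hc, -⟩ := Option.bind_eq_some_iff.1 hf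
    exact .inr (count_succ_lt_count_of_fW_eq_some (hb j) hc)

end QWord

open QWord

/-- a word `1 ⊗ b' ∈ 𝐁^{⊗(N+1)}` (letters in `{1,…,n}`, here
`0`-based) is a `gl(n)`-highest weight word if and only if
`b' = f₁ ⋯ f_{j-1} b` for some `gl(n)`-highest weight word `b ∈ 𝐁^{⊗N}` and
some `j ∈ {1,…,n}` (here `0`-based `j ∈ {0,…,n-1}`) such that
`wt(b) + ε_j` is again a partition. -/
theorem stmt_19 (n : ℕ) (hn : 1 ≤ n) (b' : List ℕ) (hb' : ∀ a ∈ b', a < n) :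
    (∀ i, i + 1 < n → eW i (0 :: b') = none) ↔
      ∃ (b : List ℕ) (j : ℕ), j < n ∧ (∀ a ∈ b, a < n) ∧
        (∀ i, i + 1 < n → eW i b = none) ∧
        (j = 0 ∨ b.count j < b.count (j - 1)) ∧
        fseq j b = some b' := by
  rw [forall_eW_eq_none_iff (List.forall_mem_cons.2 ⟨hn, hb'⟩),
    forall_epsW_cons_zero_eq_zero_iff]
  constructor
  · intro hε
    obtain ⟨j, b, hj, hb, hbε, hf⟩ :=
      exists_fseq_eq_some_of_epsW_le 0 b' hε (by omega) rfl hb' hn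
    exact ⟨b, j, hj, hb, (forall_eW_eq_none_iff hb).2 hbε,
      count_lt_count_pred_of_fseq_eq_some hbε hf, hf⟩
  · rintro ⟨b, j, -, hb, hbhw, -, hf⟩
    have hbε := (forall_eW_eq_none_iff hb).1 hbhw
    exact epsW_le_of_fseq_eq_some j b (fun i _ => hbε i) (.inl (hbε j)) hf
end
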